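/- Let L be a directly irreducible, algebraic, complete OML with the covering property. Then L is modular and has finite height: the modular law holds in L (for all x ≤ z and all y, x ⊔ (y ⊓ z) = (x ⊔ y) ⊓ z), and there is n ∈ ℕ such that every chain in L has at most n + 1 elements. -/

import Mathlib

/-- A complete orthomodular lattice. -/
class CompleteOML (α : Type*) extends CompleteLattice α, Compl α where
  compl_compl : ∀ x : α, xᶜᶜ = x
  compl_antitone : ∀ x y : α, x ≤ y → yᶜ ≤ xᶜ
  inf_compl : ∀ x : α, x ⊓ xᶜ = ⊥
  sup_compl : ∀ x : α, x ⊔ xᶜ = ⊤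
  orthomodular : ∀ x y : α, x ≤ y → x ⊔ (xᶜ ⊓ y) = y

/-- `x` and `y` commute: `x = (x ⊓ y) ⊔ (x ⊓ yᶜ)`. -/
def Commutes {α : Type*} [Lattice α] [Compl α] (x y : α) : Prop :=
  x = (x ⊓ y) ⊔ (x ⊓ yᶜ)

/-- The center of an OML: the set of elements commuting with every element. -/
def CenterSet (α : Type*) [Lattice α] [Compl α] : Set α := {c | ∀ y : α, Commutes c y}

/-- A complete lattice is algebraic if every element is the supremum of the compact
elements below it. -/
def IsAlgebraicLattice (α : Type*) [CompleteLattice α] : Prop :=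
  ∀ x : α, x = sSup {c : α | IsCompactElement c ∧ c ≤ x}

/-!
In an algebraic OML atoms are compact and every nonzero element lies above an atom; with the
covering property, joins of atoms satisfy the Steinitz exchange property. So the least number of
atoms spanning a finite join of atoms is a rank function: it bounds the length of chains, it is
additive on orthogonal pairs, and (using relative orthocomplements) it satisfies
`rank (x ⊔ y) + rank (x ⊓ y) = rank x + rank y`, which forces the modular law below any finite
join of atoms. In particular two lines in a plane meet, so perspectivity of atoms is transitive;
the join of all atoms perspective to a given one is then central, hence `⊤` by irreducibility,
so all atoms are perspective.

It remains to see that `⊤` is a finite join of atoms. Otherwise there is an infinite orthogonal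
sequence of atoms `aₙ`, and perspectivity provides third atoms `cₙ ≤ aₙ ⊔ aₙ₊₁`. Counting ranks,
`a₀` is not below any finite part of `w = ⨆ cₙ`, hence by compactness `a₀ ≰ w`, so `w` is covered
by `w ⊔ a₀ = ⨆ aₙ` and `b = wᶜ ⊓ ⨆ aₙ` is an atom. By compactness `b ≤ a₀ ⊔ ⋯ ⊔ aₘ` for some `m`,
and since `(a₀ ⊔ ⋯ ⊔ aₙ) ⊓ cₙᶜ = a₀ ⊔ ⋯ ⊔ aₙ₋₁` (again by counting ranks), `b = ⊥`.
-/

class HasCoveringProperty (α : Type*) [Lattice α] [OrderBot α] : Prop where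
  covBy_sup_of_not_le : ∀ {p : α}, IsAtom p → ∀ {x : α}, ¬ p ≤ x → x ⋖ x ⊔ p

theorem isCompactlyGenerated_of_isAlgebraicLattice {α : Type*} [CompleteLattice α]
    (h : IsAlgebraicLattice α) : IsCompactlyGenerated α :=
  ⟨fun x => ⟨_, fun _ hc => hc.1, (h x).symm⟩⟩

section CompleteLattice

variable {α : Type*} [CompleteLattice α] {k : α}

theorem IsCompactElement.exists_le_of_monotone (hk : IsCompactElement k) {f : ℕ → α}
    (hf : Monotone f) (h : k ≤ ⨆ n, f n) : ∃ n, k ≤ f n := by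
  obtain ⟨_, ⟨n, rfl⟩, hn⟩ := (CompleteLattice.isCompactElement_iff_le_of_directed_sSup_le α k).mp
    hk (Set.range f) (Set.range_nonempty f) (directedOn_range.mpr hf.directed_le) h
  exact ⟨n, hn⟩

theorem IsCompactElement.exists_covBy (hk : IsCompactElement k) (h : k ≠ ⊥) : ∃ m, m ⋖ k := by
  obtain h' | ⟨m, hm, -⟩ :=
    (CompleteLattice.Iic_coatomic_of_compact_element hk).eq_top_or_exists_le_coatom ⊥
  · exact absurd (congrArg Subtype.val h').symm h
  · exact ⟨m, Set.Iic.isCoatom_iff.mp hm⟩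

theorem IsAtom.isCompactElement [IsCompactlyGenerated α] (hk : IsAtom k) : IsCompactElement k := by
  by_contra hc
  refine hk.1 (le_bot_iff.mp (le_iff_compact_le_imp.mpr fun c hc' hck => ?_))
  exact ((hk.le_iff.mp hck).resolve_right (by rintro rfl; exact hc hc')).le

end CompleteLattice

theorem IsAtom.not_le_of_ne {α : Type*} [PartialOrder α] [OrderBot α] {a b : α} (ha : IsAtom a)
    (hb : IsAtom b) (h : a ≠ b) : ¬ a ≤ b :=
  fun hle => h ((hb.le_iff_eq ha.1).mp hle)

theorem IsChain.exists_forall_le {α : Type*} [PartialOrder α] {t : Finset α}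
    (ht : IsChain (· ≤ ·) (t : Set α)) (hne : t.Nonempty) : ∃ m ∈ t, ∀ y ∈ t, m ≤ y := by
  obtain ⟨m, hm⟩ := t.exists_minimal hne
  exact ⟨m, hm.prop, fun y hy => (ht.total hm.prop hy).elim id (hm.le_of_le hy)⟩

theorem IsChain.insert_of_forall_lt {α : Type*} [PartialOrder α] {t : Finset α} {x : α}
    [DecidableEq α] (ht : IsChain (· ≤ ·) (t : Set α)) (h : ∀ z ∈ t, z < x) :
    IsChain (· ≤ ·) ((insert x t : Finset α) : Set α) := by
  rw [Finset.coe_insert]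
  exact ht.insert fun z hz _ => Or.inr (h z hz).le

theorem Set.finite_and_ncard_le_of_forall_finset {α : Type*} {C : Set α} {n : ℕ}
    (h : ∀ t : Finset α, ↑t ⊆ C → t.card ≤ n) : C.Finite ∧ C.ncard ≤ n := by
  have hC : C.Finite := by
    by_contra hinf
    obtain ⟨t, htC, htn⟩ := Set.Infinite.exists_subset_card_eq hinf (n + 1)
    have := h t htC
    omega
  refine ⟨hC, ?_⟩
  rw [Set.ncard_eq_toFinset_card C hC]
  exact h _ (by simp)

namespace CompleteOML

section Orthomodular

variable {α : Type*} [CompleteOML α] {a x y : α}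

theorem compl_le_compl (h : x ≤ y) : yᶜ ≤ xᶜ := compl_antitone x y h

theorem le_compl_comm : x ≤ yᶜ ↔ y ≤ xᶜ :=
  ⟨fun h => (compl_compl y).ge.trans (compl_le_compl h),
    fun h => (compl_compl x).ge.trans (compl_le_compl h)⟩

theorem compl_sup : (x ⊔ y)ᶜ = xᶜ ⊓ yᶜ :=
  le_antisymm (le_inf (compl_le_compl le_sup_left) (compl_le_compl le_sup_right))
    (le_compl_comm.mp (sup_le (le_compl_comm.mp inf_le_left) (le_compl_comm.mp inf_le_right)))

theorem compl_inf : (x ⊓ y)ᶜ = xᶜ ⊔ yᶜ := by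
  rw [← compl_compl (xᶜ ⊔ yᶜ), compl_sup, compl_compl, compl_compl]

theorem compl_top : (⊤ : α)ᶜ = ⊥ := by
  simpa using inf_compl (⊤ : α)

theorem eq_bot_of_le_of_le_compl (h : a ≤ x) (h' : a ≤ xᶜ) : a = ⊥ :=
  le_bot_iff.mp (inf_compl x ▸ le_inf h h')

theorem eq_of_le_of_compl_inf_eq_bot (h : x ≤ y) (h' : xᶜ ⊓ y = ⊥) : x = y := by
  simpa [h'] using orthomodular x y h

theorem compl_inf_ne_bot_of_lt (h : x < y) : xᶜ ⊓ y ≠ ⊥ :=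
  fun h' => h.ne (eq_of_le_of_compl_inf_eq_bot h.le h')

theorem compl_inf_sup_cancel (h : a ≤ xᶜ) : xᶜ ⊓ (x ⊔ a) = a := by
  have hbot : aᶜ ⊓ (xᶜ ⊓ (x ⊔ a)) = ⊥ :=
    eq_bot_of_le_of_le_compl (x := x ⊔ a) (inf_le_right.trans inf_le_right)
      (compl_sup.ge.trans' (le_inf (inf_le_right.trans inf_le_left) inf_le_left))
  exact (eq_of_le_of_compl_inf_eq_bot (le_inf h le_sup_right) hbot).symm

theorem compl_compl_inf_inf (h : x ≤ y) : (xᶜ ⊓ y)ᶜ ⊓ y = x := by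
  have h' := congrArg compl (orthomodular yᶜ xᶜ (compl_le_compl h))
  simp only [compl_sup, compl_inf, compl_compl] at h'
  rw [compl_inf, compl_compl, inf_comm, sup_comm]
  exact h'

theorem isAtom_compl_inf_of_covBy (h : x ⋖ y) : IsAtom (xᶜ ⊓ y) := by
  refine ⟨compl_inf_ne_bot_of_lt h.lt, fun b hb => ?_⟩
  have hbx : b ≤ xᶜ := hb.le.trans inf_le_left
  rcases h.eq_or_eq (le_sup_left : x ≤ x ⊔ b) (sup_le h.le (hb.le.trans inf_le_right)) with h' | h'
  · exact eq_bot_of_le_of_le_compl (le_sup_right.trans h'.le) hbx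
  · rw [← h', compl_inf_sup_cancel hbx] at hb
    exact absurd hb (lt_irrefl b)

theorem _root_.Commutes.symm (h : Commutes x y) : Commutes y x := by
  set d := x ⊓ y ⊔ xᶜ ⊓ y
  have hx : x ≤ (dᶜ ⊓ y)ᶜ := calc
    x = x ⊓ y ⊔ x ⊓ yᶜ := h
    _ ≤ (dᶜ ⊓ y)ᶜ := sup_le
      (le_compl_comm.mpr (inf_le_left.trans (compl_le_compl le_sup_left)))
      (le_compl_comm.mpr (inf_le_right.trans (le_compl_comm.mpr inf_le_right)))
  have hbot : dᶜ ⊓ y = ⊥ := eq_bot_of_le_of_le_compl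
    ((le_inf (le_compl_comm.mp hx) inf_le_right).trans le_sup_right) inf_le_left
  have hd := eq_of_le_of_compl_inf_eq_bot (sup_le inf_le_right inf_le_right) hbot
  show y = y ⊓ x ⊔ y ⊓ xᶜ
  rw [inf_comm y x, inf_comm y xᶜ]
  exact hd.symm

end Orthomodular

section Rank

variable {β : Type*} [SemilatticeSup β] [OrderBot β] {s : Finset β} {a x y : β}

def Spans (s : Finset β) (x : β) : Prop := (∀ a ∈ s, IsAtom a) ∧ s.sup id = x

def IsFiniteElement (x : β) : Prop := ∃ s, Spans s x

/-- Junk value `0` when `x` is not a finite join of atoms. -/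
noncomputable def rank (x : β) : ℕ := sInf {n | ∃ s, Spans s x ∧ s.card = n}

/-- Perspectivity of atoms: a third atom `c ≤ p ⊔ q` is a common complement of `p` and `q` in
`[⊥, p ⊔ q]`. -/
def Persp (p q : β) : Prop := p = q ∨ ∃ c, IsAtom c ∧ c ≤ p ⊔ q ∧ c ≠ p ∧ c ≠ q

theorem Spans.rank_le (h : Spans s x) : rank x ≤ s.card := Nat.sInf_le ⟨s, h, rfl⟩

theorem IsFiniteElement.exists_spans_card_eq (hx : IsFiniteElement x) :
    ∃ s, Spans s x ∧ s.card = rank x := by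
  obtain ⟨s, hs⟩ := hx
  have hne : {n | ∃ s, Spans s x ∧ s.card = n}.Nonempty := ⟨s.card, s, hs, rfl⟩
  exact Nat.sInf_mem hne

theorem spans_image {ι : Type*} [DecidableEq β] (s : Finset ι) {f : ι → β}
    (hf : ∀ i ∈ s, IsAtom (f i)) : Spans (s.image f) (s.sup f) :=
  ⟨by simpa using hf, by rw [Finset.sup_image]; rfl⟩

theorem Spans.union [DecidableEq β] {t : Finset β} (hs : Spans s x) (ht : Spans t y) :
    Spans (s ∪ t) (x ⊔ y) :=
  ⟨fun a ha => (Finset.mem_union.mp ha).elim (hs.1 a) (ht.1 a), by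
    rw [Finset.sup_union, hs.2, ht.2]⟩

theorem isFiniteElement_bot : IsFiniteElement (⊥ : β) := ⟨∅, by simp, Finset.sup_empty⟩

theorem _root_.IsAtom.spans_singleton (ha : IsAtom a) : Spans {a} a :=
  ⟨by simpa using ha, Finset.sup_singleton⟩

theorem _root_.IsAtom.isFiniteElement (ha : IsAtom a) : IsFiniteElement a := ⟨_, ha.spans_singleton⟩

theorem IsFiniteElement.sup (hx : IsFiniteElement x) (hy : IsFiniteElement y) :
    IsFiniteElement (x ⊔ y) := by
  classical
  obtain ⟨s, hs⟩ := hx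
  obtain ⟨t, ht⟩ := hy
  exact ⟨_, hs.union ht⟩

theorem rank_bot : rank (⊥ : β) = 0 :=
  Nat.eq_zero_of_le_zero (Spans.rank_le (s := ∅) ⟨by simp, Finset.sup_empty⟩)

theorem rank_sup_le (hx : IsFiniteElement x) (hy : IsFiniteElement y) :
    rank (x ⊔ y) ≤ rank x + rank y := by
  classical
  obtain ⟨s, hs, hsx⟩ := hx.exists_spans_card_eq
  obtain ⟨t, ht, hty⟩ := hy.exists_spans_card_eq
  exact (hs.union ht).rank_le.trans ((Finset.card_union_le s t).trans_eq (by rw [hsx, hty]))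

theorem IsFiniteElement.eq_bot_of_rank_eq_zero (hx : IsFiniteElement x) (h : rank x = 0) :
    x = ⊥ := by
  obtain ⟨s, hs, hsx⟩ := hx.exists_spans_card_eq
  rw [← hs.2, Finset.card_eq_zero.mp (hsx.trans h), Finset.sup_empty]

theorem _root_.IsAtom.rank_eq_one (ha : IsAtom a) : rank a = 1 :=
  le_antisymm ha.spans_singleton.rank_le
    (Nat.one_le_iff_ne_zero.mpr fun h => ha.1 (ha.isFiniteElement.eq_bot_of_rank_eq_zero h))

theorem IsFiniteElement.exists_lt_rank_eq {n : ℕ} (hx : IsFiniteElement x) (h : rank x = n + 1) :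
    ∃ y < x, IsFiniteElement y ∧ rank y = n := by
  classical
  obtain ⟨s, hs, hsx⟩ := hx.exists_spans_card_eq
  obtain ⟨a, ha⟩ : s.Nonempty := Finset.card_pos.mp (by omega)
  have hy : Spans (s.erase a) ((s.erase a).sup id) :=
    ⟨fun b hb => hs.1 b (Finset.mem_of_mem_erase hb), rfl⟩
  have hxy : x = (s.erase a).sup id ⊔ a := by
    rw [← hs.2, sup_comm]
    conv_lhs => rw [← Finset.insert_erase ha]
    rw [Finset.sup_insert]
    rfl
  have hle : rank ((s.erase a).sup id) ≤ n := by
    have := hy.rank_le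
    rw [Finset.card_erase_of_mem ha] at this
    omega
  have hge : rank x ≤ rank ((s.erase a).sup id) + 1 := by
    have := rank_sup_le ⟨_, hy⟩ (hs.1 a ha).isFiniteElement
    rwa [← hxy, (hs.1 a ha).rank_eq_one] at this
  refine ⟨_, (hxy ▸ le_sup_left).lt_of_ne fun he => ?_, ⟨_, hy⟩, by omega⟩
  rw [he] at hle
  omega

theorem IsFiniteElement.exists_isChain_card_eq_rank (hx : IsFiniteElement x) :
    ∃ t : Finset β, IsChain (· ≤ ·) (t : Set β) ∧ t.card = rank x ∧ ∀ z ∈ t, ⊥ < z ∧ z ≤ x := by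
  classical
  induction hn : rank x generalizing x with
  | zero => exact ⟨∅, by simp, rfl, by simp⟩
  | succ n ih =>
    obtain ⟨y, hyx, hy, hyn⟩ := hx.exists_lt_rank_eq hn
    obtain ⟨t, ht, htc, hty⟩ := ih hy hyn
    have hlt : ∀ z ∈ t, z < x := fun z hz => (hty z hz).2.trans_lt hyx
    refine ⟨insert x t, ht.insert_of_forall_lt hlt, ?_, ?_⟩
    · rw [Finset.card_insert_of_notMem fun hxt => lt_irrefl x (hlt x hxt), htc]
    · exact (Finset.forall_mem_insert _ _ _).mpr ⟨⟨bot_le.trans_lt hyx, le_rfl⟩,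
        fun z hz => ⟨(hty z hz).1, (hlt z hz).le⟩⟩

end Rank

instance isAtomic_of_isCompactlyGenerated {α : Type*} [CompleteOML α] [IsCompactlyGenerated α] :
    IsAtomic α := by
  refine ⟨fun x => or_iff_not_imp_left.mpr fun hx => ?_⟩
  obtain ⟨c, hc, hcx, hc0⟩ : ∃ c, IsCompactElement c ∧ c ≤ x ∧ c ≠ ⊥ := by
    by_contra! h
    exact hx (le_bot_iff.mp (le_iff_compact_le_imp.mpr fun c hc hcx => (h c hc hcx).le))
  obtain ⟨m, hm⟩ := hc.exists_covBy hc0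
  exact ⟨mᶜ ⊓ c, isAtom_compl_inf_of_covBy hm, inf_le_right.trans hcx⟩

section Atomic

variable {α : Type*} [CompleteOML α] [IsAtomic α] {x y z : α}

theorem exists_atom_le_not_le_of_lt (h : x < y) : ∃ a, IsAtom a ∧ a ≤ y ∧ ¬ a ≤ x := by
  obtain ⟨a, ha, hay⟩ :=
    (eq_bot_or_exists_atom_le (xᶜ ⊓ y)).resolve_left (compl_inf_ne_bot_of_lt h)
  exact ⟨a, ha, hay.trans inf_le_right,
    fun hax => ha.1 (eq_bot_of_le_of_le_compl hax (hay.trans inf_le_left))⟩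

theorem commutes_of_forall_isAtom (h : ∀ a, IsAtom a → a ≤ z ∨ a ≤ zᶜ) (y : α) :
    Commutes y z := by
  have hle : y ⊓ z ⊔ y ⊓ zᶜ ≤ y := sup_le inf_le_left inf_le_left
  refine (hle.lt_or_eq.resolve_left fun hlt => ?_).symm
  obtain ⟨a, ha, hay, hau⟩ := exists_atom_le_not_le_of_lt hlt
  rcases h a ha with haz | haz
  · exact hau (le_sup_of_le_left (le_inf hay haz))
  · exact hau (le_sup_of_le_right (le_inf hay haz))

theorem isFiniteElement_of_forall_card_le (n : ℕ)
    (h : ∀ t : Finset α, IsChain (· ≤ ·) (t : Set α) → (∀ z ∈ t, ⊥ < z ∧ z ≤ x) → t.card ≤ n) :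
    IsFiniteElement x := by
  classical
  induction n generalizing x with
  | zero =>
    by_contra hx
    have hx0 : ⊥ < x := bot_lt_iff_ne_bot.mpr (by rintro rfl; exact hx isFiniteElement_bot)
    simpa using h {x} (by simp) (by simpa using hx0)
  | succ n ih =>
    rcases eq_or_ne x ⊥ with rfl | hx
    · exact isFiniteElement_bot
    obtain ⟨a, ha, hax⟩ := (eq_bot_or_exists_atom_le x).resolve_left hx
    have hlt : aᶜ ⊓ x < x := inf_le_right.lt_of_ne fun he =>
      ha.1 (eq_bot_of_le_of_le_compl le_rfl (hax.trans (he.ge.trans inf_le_left)))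
    have hr : IsFiniteElement (aᶜ ⊓ x) := ih fun t ht htr => by
      have hlt' : ∀ z ∈ t, z < x := fun z hz => (htr z hz).2.trans_lt hlt
      have := h (insert x t) (ht.insert_of_forall_lt hlt')
        ((Finset.forall_mem_insert _ _ _).mpr ⟨⟨bot_lt_iff_ne_bot.mpr hx, le_rfl⟩,
          fun z hz => ⟨(htr z hz).1, (hlt' z hz).le⟩⟩)
      rwa [Finset.card_insert_of_notMem fun hxt => lt_irrefl x (hlt' x hxt),
        add_le_add_iff_right] at this
    rw [← orthomodular a x hax]
    exact ha.isFiniteElement.sup hr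

end Atomic

section Covering

variable {α : Type*} [CompleteOML α] [HasCoveringProperty α] {p q r x : α}

theorem sup_eq_sup_of_le_sup (hp : IsAtom p) (hq : q ≤ x ⊔ p) (hqx : ¬ q ≤ x) :
    x ⊔ q = x ⊔ p := by
  have hcov := HasCoveringProperty.covBy_sup_of_not_le hp fun hpx =>
    hqx (hq.trans (sup_le le_rfl hpx))
  exact (hcov.eq_or_eq le_sup_left (sup_le le_sup_left hq)).resolve_left fun h =>
    hqx (le_sup_right.trans h.le)

theorem exists_mem_le_sup_sup_erase [DecidableEq α] {s : Finset α} (hs : ∀ a ∈ s, IsAtom a)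
    (hq : q ≤ x ⊔ s.sup id) (hqx : ¬ q ≤ x) : ∃ a ∈ s, a ≤ x ⊔ q ⊔ (s.erase a).sup id := by
  induction s using Finset.induction_on with
  | empty => exact absurd (by simpa using hq) hqx
  | @insert a s ha ih =>
    rw [Finset.sup_insert] at hq
    by_cases hq' : q ≤ x ⊔ s.sup id
    · obtain ⟨b, hb, hble⟩ := ih (fun b hb => hs b (Finset.mem_insert_of_mem hb)) hq'
      exact ⟨b, Finset.mem_insert_of_mem hb, hble.trans (sup_le_sup_left
        (Finset.sup_mono (Finset.erase_subset_erase b (Finset.subset_insert a s))) _)⟩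
    · have hexch := sup_eq_sup_of_le_sup (hs a (Finset.mem_insert_self a s))
        (hq.trans (sup_le (le_sup_left.trans le_sup_left)
          (sup_le le_sup_right (le_sup_right.trans le_sup_left)))) hq'
      refine ⟨a, Finset.mem_insert_self a s, ?_⟩
      rw [Finset.erase_insert ha]
      calc a ≤ x ⊔ s.sup id ⊔ a := le_sup_right
        _ = x ⊔ s.sup id ⊔ q := hexch.symm
        _ = x ⊔ q ⊔ s.sup id := sup_right_comm _ _ _

theorem le_compl_of_not_persp (hp : IsAtom p) (hq : IsAtom q) (h : ¬ Persp p q) : q ≤ pᶜ := by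
  have hqp : ¬ q ≤ p := fun hle => h (Or.inl ((hp.le_iff_eq hq.1).mp hle).symm)
  have hr := isAtom_compl_inf_of_covBy (HasCoveringProperty.covBy_sup_of_not_le hq hqp)
  have hrq : pᶜ ⊓ (p ⊔ q) = q := by
    by_contra hne
    refine h (Or.inr ⟨_, hr, inf_le_right, fun hrp => hp.1 ?_, hne⟩)
    exact eq_bot_of_le_of_le_compl le_rfl (hrp.ge.trans inf_le_left)
  exact hrq.ge.trans inf_le_left

/-- If the line through the third atoms `x` of `p ⊔ q` and `y` of `q ⊔ r` passes through `p`,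
then all these atoms lie on one line. -/
theorem le_sup_of_le_sup_third_atoms {y : α} (hp : IsAtom p) (hq : IsAtom q) (hr : IsAtom r)
    (hx : IsAtom x) (hy : IsAtom y) (hxpq : x ≤ p ⊔ q) (hxp : x ≠ p) (hyqr : y ≤ q ⊔ r)
    (hyq : y ≠ q) (hpxy : p ≤ x ⊔ y) : r ≤ p ⊔ q := by
  have h₁ : x ⊔ p = x ⊔ y := sup_eq_sup_of_le_sup hy hpxy (hp.not_le_of_ne hx hxp.symm)
  have h₂ : p ⊔ x = p ⊔ q := sup_eq_sup_of_le_sup hq hxpq (hx.not_le_of_ne hp hxp)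
  have h₃ : q ⊔ y = q ⊔ r := sup_eq_sup_of_le_sup hr hyqr (hy.not_le_of_ne hq hyq)
  have hy' : y ≤ p ⊔ q := by rw [← h₂, sup_comm, h₁]; exact le_sup_right
  exact le_sup_right.trans (h₃.ge.trans (sup_le le_sup_right hy'))

variable [IsAtomic α]

theorem card_le_of_isChain {s : Finset α} (hs : ∀ a ∈ s, IsAtom a) {t : Finset α}
    (ht : IsChain (· ≤ ·) (t : Set α)) (htx : ∀ y ∈ t, x < y ∧ y ≤ x ⊔ s.sup id) :
    t.card ≤ s.card := by
  classical
  induction s using Finset.strongInduction generalizing t x with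
  | H s ih =>
    rcases t.eq_empty_or_nonempty with rfl | hne
    · simp
    obtain ⟨m, hm, hmle⟩ := ht.exists_forall_le hne
    obtain ⟨q, hq, hqm, hqx⟩ := exists_atom_le_not_le_of_lt (htx m hm).1
    obtain ⟨a, ha, hale⟩ :=
      exists_mem_le_sup_sup_erase hs (hqm.trans (htx m hm).2) hqx
    have hxq : x ⊔ q ≤ m := sup_le (htx m hm).1.le hqm
    have hup : x ⊔ s.sup id ≤ m ⊔ (s.erase a).sup id := by
      refine sup_le ((htx m hm).1.le.trans le_sup_left) (Finset.sup_le fun b hb => ?_)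
      rcases eq_or_ne b a with rfl | hba
      · exact hale.trans (sup_le_sup_right hxq _)
      · exact le_sup_of_le_right (Finset.le_sup (f := id) (Finset.mem_erase.mpr ⟨hba, hb⟩))
    have := ih (s.erase a) (Finset.erase_ssubset ha) (fun b hb => hs b (Finset.mem_of_mem_erase hb))
      (ht.mono (Finset.coe_subset.mpr (Finset.erase_subset m t))) (x := m) fun y hy =>
        ⟨(hmle y (Finset.mem_of_mem_erase hy)).lt_of_ne (Finset.ne_of_mem_erase hy).symm,
          (htx y (Finset.mem_of_mem_erase hy)).2.trans hup⟩
    rw [Finset.card_erase_of_mem hm, Finset.card_erase_of_mem ha] at this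
    have := Finset.card_pos.mpr hne
    have := Finset.card_pos.mpr ⟨a, ha⟩
    omega

variable {x y : α}

theorem card_le_rank_of_isChain (hy : IsFiniteElement y) {t : Finset α}
    (ht : IsChain (· ≤ ·) (t : Set α)) (hty : ∀ z ∈ t, ⊥ < z ∧ z ≤ y) : t.card ≤ rank y := by
  obtain ⟨s, hs, hsy⟩ := hy.exists_spans_card_eq
  exact hsy ▸ card_le_of_isChain hs.1 ht fun z hz => by
    rw [bot_sup_eq, hs.2]
    exact hty z hz

theorem rank_lt_rank (hx : IsFiniteElement x) (hy : IsFiniteElement y) (h : x < y) :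
    rank x < rank y := by
  classical
  obtain ⟨t, ht, htc, htx⟩ := hx.exists_isChain_card_eq_rank
  have hlt : ∀ z ∈ t, z < y := fun z hz => (htx z hz).2.trans_lt h
  have := card_le_rank_of_isChain hy (ht.insert_of_forall_lt hlt)
    ((Finset.forall_mem_insert _ _ _).mpr ⟨⟨bot_le.trans_lt h, le_rfl⟩,
      fun z hz => ⟨(htx z hz).1, (hlt z hz).le⟩⟩)
  rw [Finset.card_insert_of_notMem fun hyt => lt_irrefl y (hlt y hyt), htc] at this
  omega

theorem rank_mono (hx : IsFiniteElement x) (hy : IsFiniteElement y) (h : x ≤ y) :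
    rank x ≤ rank y := by
  rcases h.lt_or_eq with h | rfl
  exacts [(rank_lt_rank hx hy h).le, le_rfl]

theorem eq_of_le_of_rank_le (hx : IsFiniteElement x) (hy : IsFiniteElement y) (h : x ≤ y)
    (h' : rank y ≤ rank x) : x = y :=
  h.eq_of_not_lt fun hlt => (rank_lt_rank hx hy hlt).not_ge h'

theorem IsFiniteElement.of_le (hy : IsFiniteElement y) (h : x ≤ y) : IsFiniteElement x :=
  isFiniteElement_of_forall_card_le (rank y) fun _ ht htx =>
    card_le_rank_of_isChain hy ht fun z hz => ⟨(htx z hz).1, (htx z hz).2.trans h⟩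

theorem rank_sup_of_le_compl (hx : IsFiniteElement x) (hy : IsFiniteElement y) (h : y ≤ xᶜ) :
    rank (x ⊔ y) = rank x + rank y := by
  induction hn : rank y generalizing y with
  | zero => rw [hy.eq_bot_of_rank_eq_zero hn, sup_bot_eq, add_zero]
  | succ n ih =>
    obtain ⟨y', hy'y, hy', hn'⟩ := hy.exists_lt_rank_eq hn
    have hlt : x ⊔ y' < x ⊔ y := (sup_le_sup_left hy'y.le x).lt_of_ne fun he =>
      hy'y.not_ge (calc
        y = xᶜ ⊓ (x ⊔ y) := (compl_inf_sup_cancel h).symm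
        _ = xᶜ ⊓ (x ⊔ y') := by rw [he]
        _ = y' := compl_inf_sup_cancel (hy'y.le.trans h)).le
    have h₁ := rank_lt_rank (hx.sup hy') (hx.sup hy) hlt
    have h₂ := rank_sup_le hx hy
    rw [ih hy' (hy'y.le.trans h) hn'] at h₁
    omega

theorem rank_compl_inf_add_rank (hy : IsFiniteElement y) (h : x ≤ y) :
    rank (xᶜ ⊓ y) + rank x = rank y := by
  have := rank_sup_of_le_compl (hy.of_le h) (hy.of_le inf_le_right) inf_le_left
  rw [orthomodular x y h] at this
  omega

theorem rank_sup_add_rank_inf (hx : IsFiniteElement x) (hy : IsFiniteElement y) :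
    rank (x ⊔ y) + rank (x ⊓ y) = rank x + rank y := by
  have hP := hx.sup hy
  apply le_antisymm
  · -- `y` splits orthogonally into `x ⊓ y` and `(x ⊓ y)ᶜ ⊓ y`, and only the latter is new to `x`
    have hsplit : x ⊔ (x ⊓ y)ᶜ ⊓ y = x ⊔ y := by
      conv_rhs => rw [← orthomodular (x ⊓ y) y inf_le_right]
      rw [← sup_assoc, sup_inf_self]
    have h₁ := rank_compl_inf_add_rank hy (inf_le_right : x ⊓ y ≤ y)
    have h₂ := rank_sup_le hx (hy.of_le (inf_le_right : (x ⊓ y)ᶜ ⊓ y ≤ y))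
    rw [hsplit] at h₂
    omega
  · -- the relative complement in `x ⊔ y` of `xᶜ ⊓ (x ⊔ y) ⊔ yᶜ ⊓ (x ⊔ y)` lies below `x ⊓ y`,
    -- and its rank is at least `rank x + rank y - rank (x ⊔ y)`
    set P := x ⊔ y
    have hu : xᶜ ⊓ P ⊔ yᶜ ⊓ P ≤ P := sup_le inf_le_right inf_le_right
    have hle : (xᶜ ⊓ P ⊔ yᶜ ⊓ P)ᶜ ⊓ P ≤ x ⊓ y := le_inf
      ((inf_le_inf_right P (compl_le_compl le_sup_left)).trans (compl_compl_inf_inf le_sup_left).le)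
      ((inf_le_inf_right P (compl_le_compl le_sup_right)).trans
        (compl_compl_inf_inf le_sup_right).le)
    have h₁ := rank_compl_inf_add_rank hP hu
    have h₂ := rank_sup_le (hP.of_le (inf_le_right : xᶜ ⊓ P ≤ P))
      (hP.of_le (inf_le_right : yᶜ ⊓ P ≤ P))
    have h₃ := rank_compl_inf_add_rank hP (le_sup_left : x ≤ P)
    have h₄ := rank_compl_inf_add_rank hP (le_sup_right : y ≤ P)
    have h₅ := rank_mono (hP.of_le inf_le_right) (hx.of_le inf_le_left) hle
    omega

theorem isModularLattice_of_isFiniteElement_top (htop : IsFiniteElement (⊤ : α)) :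
    IsModularLattice α := by
  have hfin : ∀ x : α, IsFiniteElement x := fun x => htop.of_le le_top
  refine ⟨fun {x} y {z} hxz => (eq_of_le_of_rank_le (hfin _) (hfin _)
    (sup_le (le_inf le_sup_left hxz) (inf_le_inf_right z le_sup_right)) ?_).ge⟩
  have h₁ := rank_sup_add_rank_inf (hfin x) (hfin (y ⊓ z))
  have h₂ := rank_sup_add_rank_inf (hfin (x ⊔ y)) (hfin z)
  have h₃ := rank_sup_add_rank_inf (hfin x) (hfin y)
  have h₄ := rank_sup_add_rank_inf (hfin y) (hfin z)
  rw [← inf_assoc, inf_eq_left.mpr (inf_le_left.trans hxz)] at h₁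
  rw [sup_assoc, sup_eq_right.mpr (hxz.trans le_sup_right)] at h₂
  omega

theorem rank_sup_of_ne (hp : IsAtom p) (hq : IsAtom q) (h : p ≠ q) : rank (p ⊔ q) = 2 := by
  have h₁ := rank_sup_le hp.isFiniteElement hq.isFiniteElement
  have h₂ := rank_lt_rank hp.isFiniteElement (hp.isFiniteElement.sup hq.isFiniteElement)
    (left_lt_sup.mpr (hq.not_le_of_ne hp h.symm))
  rw [hp.rank_eq_one, hq.rank_eq_one] at *
  omega

theorem inf_ne_bot_of_rank_lt {z : α} (hz : IsFiniteElement z) (hxz : x ≤ z) (hyz : y ≤ z)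
    (h : rank z < rank x + rank y) : x ⊓ y ≠ ⊥ := fun hbot => by
  have h₁ := rank_sup_add_rank_inf (hz.of_le hxz) (hz.of_le hyz)
  have h₂ := rank_mono ((hz.of_le hxz).sup (hz.of_le hyz)) hz (sup_le hxz hyz)
  rw [hbot, rank_bot] at h₁
  omega

theorem persp_of_not_le_sup {x y : α} (hp : IsAtom p) (hq : IsAtom q) (hr : IsAtom r)
    (hx : IsAtom x) (hy : IsAtom y) (hxpq : x ≤ p ⊔ q) (hxp : x ≠ p) (hxq : x ≠ q)
    (hyqr : y ≤ q ⊔ r) (hyq : y ≠ q) (hyr : y ≠ r) (hrpq : ¬ r ≤ p ⊔ q) : Persp p r := by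
  -- `p, q, r` span a plane, in which the lines `x ⊔ y` and `p ⊔ r` meet
  have hpq : p ≠ q := by
    rintro rfl
    exact hxp ((hp.le_iff_eq hx.1).mp (by simpa using hxpq))
  have hpr : p ≠ r := by
    rintro rfl
    exact hrpq le_sup_left
  have hxy : x ≠ y := by
    rintro rfl
    have hxq' := hx.not_le_of_ne hq hxq
    refine hrpq ?_
    calc r ≤ q ⊔ r := le_sup_right
      _ = q ⊔ x := (sup_eq_sup_of_le_sup hr hyqr hxq').symm
      _ = q ⊔ p := sup_eq_sup_of_le_sup hp (hxpq.trans (sup_comm p q).le) hxq'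
      _ = p ⊔ q := sup_comm q p
  have hP := (hp.isFiniteElement.sup hq.isFiniteElement).sup hr.isFiniteElement
  have hrankP : rank (p ⊔ q ⊔ r) ≤ 3 := by
    have := (rank_sup_le (hp.isFiniteElement.sup hq.isFiniteElement) hr.isFiniteElement).trans
      (add_le_add_left (rank_sup_le hp.isFiniteElement hq.isFiniteElement) _)
    rwa [hp.rank_eq_one, hq.rank_eq_one, hr.rank_eq_one] at this
  have hmeet : (x ⊔ y) ⊓ (p ⊔ r) ≠ ⊥ := inf_ne_bot_of_rank_lt hP
    (sup_le (hxpq.trans le_sup_left)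
      (hyqr.trans (sup_le (le_sup_right.trans le_sup_left) le_sup_right)))
    (sup_le (le_sup_left.trans le_sup_left) le_sup_right)
    (by rw [rank_sup_of_ne hx hy hxy, rank_sup_of_ne hp hr hpr]; omega)
  obtain ⟨z, hz, hzle⟩ := (eq_bot_or_exists_atom_le _).resolve_left hmeet
  refine Or.inr ⟨z, hz, hzle.trans inf_le_right, ?_, ?_⟩
  · rintro rfl
    exact hrpq (le_sup_of_le_sup_third_atoms hz hq hr hx hy hxpq hxp hyqr hyq
      (hzle.trans inf_le_left))
  · rintro rfl
    have hpzq := le_sup_of_le_sup_third_atoms hz hq hp hy hx (hyqr.trans (sup_comm q z).le) hyr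
      (hxpq.trans (sup_comm p q).le) hxq ((hzle.trans inf_le_left).trans (sup_comm x y).le)
    have h := sup_eq_sup_of_le_sup hz (hpzq.trans (sup_comm z q).le) (hp.not_le_of_ne hq hpq)
    exact hrpq (le_sup_right.trans (h.ge.trans (sup_comm q p).le))

theorem Persp.trans (hp : IsAtom p) (hq : IsAtom q) (hr : IsAtom r) (hpq : Persp p q)
    (hqr : Persp q r) : Persp p r := by
  obtain rfl | ⟨x, hx, hxpq, hxp, hxq⟩ := hpq
  · exact hqr
  obtain rfl | ⟨y, hy, hyqr, hyq, hyr⟩ := hqr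
  · exact Or.inr ⟨x, hx, hxpq, hxp, hxq⟩
  by_cases hrpq : r ≤ p ⊔ q
  · -- then `p ⊔ r = p ⊔ q`, and `q` is the third atom
    rcases eq_or_ne p r with rfl | hpr
    · exact Or.inl rfl
    have hqp : q ≠ p := by
      rintro rfl
      exact hxq ((hq.le_iff_eq hx.1).mp (by simpa using hxpq))
    have hqr : q ≠ r := by
      rintro rfl
      exact hyq ((hq.le_iff_eq hy.1).mp (by simpa using hyqr))
    have h := sup_eq_sup_of_le_sup hq hrpq (hr.not_le_of_ne hp hpr.symm)
    exact Or.inr ⟨q, hq, h.ge.trans' le_sup_right, hqp, hqr⟩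
  · exact persp_of_not_le_sup hp hq hr hx hy hxpq hxp hxq hyqr hyq hyr hrpq

theorem persp_of_isAtom (hirr : CenterSet α = {⊥, ⊤}) (hp : IsAtom p) (hq : IsAtom q) :
    Persp p q := by
  set S : Set α := {c | IsAtom c ∧ Persp p c}
  set z := sSup S
  have horth : ∀ t, IsAtom t → ¬ Persp p t → t ≤ zᶜ := by
    refine fun t ht hpt => le_compl_comm.mpr (sSup_le ?_)
    rintro c ⟨hc, hpc⟩
    exact le_compl_comm.mpr (le_compl_of_not_persp hc ht fun hct => hpt (hpc.trans hp hc ht hct))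
  have hz : z ∈ CenterSet α := fun y => (commutes_of_forall_isAtom (fun t ht =>
    (em (Persp p t)).imp (fun hpt => le_sSup (show t ∈ S from ⟨ht, hpt⟩)) (horth t ht)) y).symm
  rw [hirr] at hz
  rcases hz with hz | hz
  · exact absurd (le_bot_iff.mp ((le_sSup (show p ∈ S from ⟨hp, Or.inl rfl⟩)).trans hz.le)) hp.1
  · by_contra hpq
    have := horth q hq hpq
    rw [hz, compl_top] at this
    exact hq.1 (le_bot_iff.mp this)

theorem card_le_rank_add_one_of_isChain (hy : IsFiniteElement y) {t : Finset α}
    (ht : IsChain (· ≤ ·) (t : Set α)) (hty : ∀ z ∈ t, z ≤ y) : t.card ≤ rank y + 1 := by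
  classical
  have h := card_le_rank_of_isChain hy
    (ht.mono (Finset.coe_subset.mpr (Finset.filter_subset (⊥ < ·) t))) fun z hz =>
      ⟨(Finset.mem_filter.mp hz).2, hty z (Finset.mem_filter.mp hz).1⟩
  calc t.card ≤ (insert ⊥ (t.filter (⊥ < ·))).card := Finset.card_le_card fun z hz =>
        (eq_bot_or_bot_lt z).elim (fun h => h ▸ Finset.mem_insert_self _ _)
          fun h => Finset.mem_insert_of_mem (Finset.mem_filter.mpr ⟨hz, h⟩)
    _ ≤ rank y + 1 := (Finset.card_insert_le _ _).trans (by omega)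

end Covering

/-- An infinite orthogonal sequence of atoms, consecutive ones perspective through the third
atoms `axis n`; `join n` is `atom 0 ⊔ ⋯ ⊔ atom (n - 1)`. -/
structure PerspSeq (α : Type*) [CompleteOML α] where
  atom : ℕ → α
  join : ℕ → α
  axis : ℕ → α
  join_zero : join 0 = ⊥
  join_succ : ∀ n, join (n + 1) = join n ⊔ atom n
  isAtom_atom : ∀ n, IsAtom (atom n)
  atom_le_compl : ∀ n, atom n ≤ (join n)ᶜ
  isAtom_axis : ∀ n, IsAtom (axis n)
  axis_le : ∀ n, axis n ≤ atom n ⊔ atom (n + 1)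
  axis_ne_atom : ∀ n, axis n ≠ atom n
  axis_ne_atom_succ : ∀ n, axis n ≠ atom (n + 1)

namespace PerspSeq

section Orthomodular

variable {α : Type*} [CompleteOML α] (S : PerspSeq α) (n : ℕ)

theorem join_mono : Monotone S.join :=
  monotone_nat_of_le_succ fun n => le_sup_left.trans (S.join_succ n).ge

theorem atom_le_join_succ : S.atom n ≤ S.join (n + 1) := le_sup_right.trans (S.join_succ n).ge

theorem atom_succ_le_compl_atom : S.atom (n + 1) ≤ (S.atom n)ᶜ :=
  (S.atom_le_compl _).trans (compl_le_compl (S.atom_le_join_succ n))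

theorem axis_le_compl_join : S.axis n ≤ (S.join n)ᶜ :=
  (S.axis_le n).trans (sup_le (S.atom_le_compl n)
    ((S.atom_le_compl (n + 1)).trans (compl_le_compl (S.join_mono n.le_succ))))

theorem not_axis_le_compl_atom : ¬ S.axis n ≤ (S.atom n)ᶜ := fun h =>
  S.axis_ne_atom_succ n (((S.isAtom_atom (n + 1)).le_iff_eq (S.isAtom_axis n).1).mp
    ((le_inf h (S.axis_le n)).trans_eq (compl_inf_sup_cancel (S.atom_succ_le_compl_atom n))))

theorem isFiniteElement_join : IsFiniteElement (S.join n) := by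
  induction n with
  | zero => exact S.join_zero ▸ isFiniteElement_bot
  | succ n ih => exact S.join_succ n ▸ ih.sup (S.isAtom_atom n).isFiniteElement

end Orthomodular

section Covering

variable {α : Type*} [CompleteOML α] [HasCoveringProperty α] (S : PerspSeq α) (n : ℕ)

theorem atom_succ_le : S.atom (n + 1) ≤ S.atom n ⊔ S.axis n :=
  le_sup_right.trans (sup_eq_sup_of_le_sup (S.isAtom_atom (n + 1)) (S.axis_le n)
    ((S.isAtom_axis n).not_le_of_ne (S.isAtom_atom n) (S.axis_ne_atom n))).ge

theorem atom_le_iSup_axis_sup : S.atom n ≤ (⨆ i, S.axis i) ⊔ S.atom 0 := by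
  induction n with
  | zero => exact le_sup_right
  | succ n ih => exact (S.atom_succ_le n).trans (sup_le ih (le_sup_of_le_left (le_iSup _ n)))

theorem join_le_atom_zero_sup : S.join (n + 1) ≤ S.atom 0 ⊔ (Finset.range n).sup S.axis := by
  induction n with
  | zero => rw [S.join_succ, S.join_zero, bot_sup_eq]; exact le_sup_left
  | succ n ih =>
    have hmono : S.atom 0 ⊔ (Finset.range n).sup S.axis ≤
        S.atom 0 ⊔ (Finset.range (n + 1)).sup S.axis :=
      sup_le_sup_left (Finset.sup_mono (Finset.range_mono n.le_succ)) _
    have hax : S.axis n ≤ (Finset.range (n + 1)).sup S.axis :=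
      Finset.le_sup (Finset.mem_range.mpr n.lt_succ_self)
    rw [S.join_succ]
    exact sup_le (ih.trans hmono) ((S.atom_succ_le n).trans
      (sup_le ((S.atom_le_join_succ n).trans (ih.trans hmono)) (hax.trans le_sup_right)))

variable [IsAtomic α]

theorem rank_join : rank (S.join n) = n := by
  induction n with
  | zero => rw [S.join_zero, rank_bot]
  | succ n ih =>
    rw [S.join_succ, rank_sup_of_le_compl (S.isFiniteElement_join n)
      (S.isAtom_atom n).isFiniteElement (S.atom_le_compl n), ih, (S.isAtom_atom n).rank_eq_one]

theorem join_succ_inf_compl_axis : S.join (n + 1) ⊓ (S.axis n)ᶜ = S.join n := by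
  set X := S.join (n + 1) ⊓ (S.axis n)ᶜ
  have hX : IsFiniteElement X := (S.isFiniteElement_join _).of_le inf_le_left
  have hc := (S.isAtom_axis n).isFiniteElement
  have h₁ := rank_sup_of_le_compl hX hc (le_compl_comm.mp inf_le_right)
  have h₂ := rank_mono (hX.sup hc) (S.isFiniteElement_join (n + 2))
    (sup_le (inf_le_left.trans (S.join_mono (n + 1).le_succ)) ((S.axis_le n).trans
      (sup_le ((S.atom_le_join_succ n).trans (S.join_mono (n + 1).le_succ))
        (S.atom_le_join_succ (n + 1)))))
  rw [(S.isAtom_axis n).rank_eq_one] at h₁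
  rw [S.rank_join] at h₂
  have hne : X ≠ S.join (n + 1) := fun h => S.not_axis_le_compl_atom n
    (le_compl_comm.mp ((S.atom_le_join_succ n).trans (h.ge.trans inf_le_right)))
  have hXn : rank X ≤ n := by
    by_contra! h
    exact hne (eq_of_le_of_rank_le hX (S.isFiniteElement_join _) inf_le_left
      (by rw [S.rank_join]; omega))
  exact (eq_of_le_of_rank_le (S.isFiniteElement_join n) hX
    (le_inf (S.join_mono n.le_succ) (le_compl_comm.mp (S.axis_le_compl_join n)))
    (by rw [S.rank_join]; exact hXn)).symm

end Covering

theorem not_atom_zero_le_iSup_axis {α : Type*} [CompleteOML α] [IsCompactlyGenerated α]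
    [HasCoveringProperty α] (S : PerspSeq α) : ¬ S.atom 0 ≤ ⨆ n, S.axis n := by
  classical
  intro h
  have hmono : Monotone fun n => (Finset.range n).sup S.axis :=
    fun _ _ hmn => Finset.sup_mono (Finset.range_mono hmn)
  have hsup : ⨆ n, S.axis n ≤ ⨆ n, (Finset.range n).sup S.axis := iSup_le fun n =>
    le_iSup_of_le (n + 1) (Finset.le_sup (Finset.mem_range.mpr n.lt_succ_self))
  obtain ⟨k, hk⟩ := (S.isAtom_atom 0).isCompactElement.exists_le_of_monotone hmono (h.trans hsup)
  have hC := spans_image (Finset.range k) fun i _ => S.isAtom_axis i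
  have h₁ := rank_mono (S.isFiniteElement_join _) ⟨_, hC⟩
    ((S.join_le_atom_zero_sup k).trans (sup_le hk le_rfl))
  have h₂ := hC.rank_le.trans (Finset.card_image_le.trans (Finset.card_range k).le)
  rw [S.rank_join] at h₁
  omega

end PerspSeq

section Compact

variable {α : Type*} [CompleteOML α] [IsCompactlyGenerated α] [HasCoveringProperty α]

theorem isEmpty_perspSeq : IsEmpty (PerspSeq α) := by
  refine ⟨fun S => ?_⟩
  set w := ⨆ n, S.axis n
  have hT : ⨆ n, S.atom n = w ⊔ S.atom 0 := le_antisymm (iSup_le S.atom_le_iSup_axis_sup)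
    (sup_le (iSup_le fun n => (S.axis_le n).trans (sup_le (le_iSup _ n) (le_iSup _ (n + 1))))
      (le_iSup _ 0))
  have hb : IsAtom (wᶜ ⊓ ⨆ n, S.atom n) := by
    rw [hT]
    exact isAtom_compl_inf_of_covBy (HasCoveringProperty.covBy_sup_of_not_le (S.isAtom_atom 0)
      S.not_atom_zero_le_iSup_axis)
  obtain ⟨m, hm⟩ := hb.isCompactElement.exists_le_of_monotone S.join_mono
    (inf_le_right.trans (iSup_le fun n => (S.atom_le_join_succ n).trans (le_iSup _ (n + 1))))
  have hdown : ∀ n, wᶜ ⊓ ⨆ n, S.atom n ≤ S.join n → wᶜ ⊓ ⨆ n, S.atom n ≤ S.join 0 := by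
    intro n
    induction n with
    | zero => exact id
    | succ n ih => exact fun h => ih ((le_inf h (inf_le_left.trans
        (compl_le_compl (le_iSup _ n)))).trans_eq (S.join_succ_inf_compl_axis n))
  exact hb.1 (le_bot_iff.mp ((hdown m hm).trans_eq S.join_zero))

theorem isFiniteElement_top (hirr : CenterSet α = {⊥, ⊤}) : IsFiniteElement (⊤ : α) := by
  by_contra htop
  have hnext : ∀ x : α, ∃ a, IsFiniteElement x → IsAtom a ∧ a ≤ xᶜ := by
    intro x
    by_cases hx : IsFiniteElement x
    · have hxc : xᶜ ≠ ⊥ := fun h => htop (by rwa [← sup_compl x, h, sup_bot_eq])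
      obtain ⟨a, ha⟩ := (eq_bot_or_exists_atom_le xᶜ).resolve_left hxc
      exact ⟨a, fun _ => ha⟩
    · exact ⟨⊥, fun h => absurd h hx⟩
  choose next hnext using hnext
  let join : ℕ → α := fun n => Nat.rec ⊥ (fun _ x => x ⊔ next x) n
  have hjoin : ∀ n, IsFiniteElement (join n) := by
    intro n
    induction n with
    | zero => exact isFiniteElement_bot
    | succ n ih => exact ih.sup (hnext _ ih).1.isFiniteElement
  have hatom : ∀ n, IsAtom (next (join n)) := fun n => (hnext _ (hjoin n)).1
  have hne : ∀ n, next (join n) ≠ next (join (n + 1)) := fun n h =>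
    (hatom n).1 (eq_bot_of_le_of_le_compl le_rfl
      (h.le.trans ((hnext _ (hjoin (n + 1))).2.trans (compl_le_compl le_sup_right))))
  choose axis haxis using fun n =>
    (persp_of_isAtom hirr (hatom n) (hatom (n + 1))).resolve_left (hne n)
  exact isEmpty_perspSeq.false
    { atom := fun n => next (join n), join, axis
      join_zero := rfl
      join_succ := fun _ => rfl
      isAtom_atom := hatom
      atom_le_compl := fun n => (hnext _ (hjoin n)).2
      isAtom_axis := fun n => (haxis n).1
      axis_le := fun n => (haxis n).2.1
      axis_ne_atom := fun n => (haxis n).2.2.1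
      axis_ne_atom_succ := fun n => (haxis n).2.2.2 }

end Compact

end CompleteOML

/-- a directly irreducible, algebraic, complete OML with the covering
property is modular and has finite height. -/
theorem directlyIrreducible_algebraic_covering_modular_finiteHeight {α : Type*}
    [CompleteOML α]
    (hirr : CenterSet α = {⊥, ⊤})
    (halg : IsAlgebraicLattice α)
    (hcov : ∀ p : α, IsAtom p → ∀ x : α, p ≤ x ∨ x ⋖ x ⊔ p) :
    (∀ x y z : α, x ≤ z → x ⊔ (y ⊓ z) = (x ⊔ y) ⊓ z) ∧
    ∃ n : ℕ, ∀ C : Set α, IsChain (· ≤ ·) C → C.Finite ∧ C.ncard ≤ n + 1 := by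
  have := isCompactlyGenerated_of_isAlgebraicLattice halg
  have : HasCoveringProperty α := ⟨fun hp x hpx => (hcov _ hp x).resolve_left hpx⟩
  have htop := CompleteOML.isFiniteElement_top hirr
  have := CompleteOML.isModularLattice_of_isFiniteElement_top htop
  refine ⟨fun x y z hxz => (sup_inf_assoc_of_le y hxz).symm, CompleteOML.rank (⊤ : α),
    fun C hC => Set.finite_and_ncard_le_of_forall_finset fun t htC => ?_⟩
  exact CompleteOML.card_le_rank_add_one_of_isChain htop (hC.mono htC) fun _ _ => le_top
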